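/- arXiv:2605.00614 — 5 statements merged into one kernel-verified Lean document; each statement's English description precedes it below -/
import Mathlib

section
/- Suppose Y = Σ_{k=1}^K β⁰_k X_k + λ⁰ f⁰' + e, where λ⁰ is a fixed N×R⁰ matrix, f⁰ is a fixed T×R⁰ matrix, β⁰ ∈ ℝ^K is fixed, and X_1,…,X_K and e are random N×T matrices on a probability space such that: (i) every entry X_{k,it} and e_{it} is square-integrable; (ii) E[e_{it}] = 0 and E[X_{k,it} e_{it}] = 0 for all k, i, t; (iii) for every T×R matrix F and every nonzero α ∈ ℝ^K one has Σ_{k,l} α_k α_l E[Tr(X_k' M_{λ⁰} X_l M_F)] > 0; and (iv) R ≥ rank(λ⁰ f⁰'). Define Q(β, Λ, F) = E ‖Y − Σ_k β_k X_k − Λ F'‖²_HS for β ∈ ℝ^K, Λ ∈ ℝ^{N×R}, F ∈ ℝ^{T×R}. Then Q(β, Λ, F) ≥ E ‖e‖²_HS for all (β, Λ, F), with equality if and only if β = β⁰ and Λ F' = λ⁰ f⁰'; in particular β⁰ and the product λ⁰ f⁰' (and hence R⁰ = rank(λ⁰ f⁰')) are identified as the unique minimizers of Q. -/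
open Matrix MeasureTheory
open scoped BigOperators

/-- Squared Frobenius (Hilbert–Schmidt) norm of a real matrix. -/
noncomputable def frobSq {n m : ℕ} (A : Matrix (Fin n) (Fin m) ℝ) : ℝ :=
  Matrix.trace (A * Aᵀ)

/-- Operator (spectral) norm of a real matrix. -/
noncomputable def opNorm {n m : ℕ} (A : Matrix (Fin n) (Fin m) ℝ) : ℝ :=
  ‖LinearMap.toContinuousLinearMap (Matrix.toEuclideanLin A)‖

/-- Orthogonal projection matrix onto the column space of `A`. -/
noncomputable def projMat {n m : ℕ} (A : Matrix (Fin n) (Fin m) ℝ) : Matrix (Fin n) (Fin n) ℝ :=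
  Matrix.toEuclideanLin.symm
    (((LinearMap.range (Matrix.toEuclideanLin A)).subtypeL.comp
      (Submodule.orthogonalProjection (LinearMap.range (Matrix.toEuclideanLin A))) :
        EuclideanSpace ℝ (Fin n) →L[ℝ] EuclideanSpace ℝ (Fin n)) :
        EuclideanSpace ℝ (Fin n) →ₗ[ℝ] EuclideanSpace ℝ (Fin n))

/-- Annihilator `M_A = I - P_A`. -/
noncomputable def annMat {n m : ℕ} (A : Matrix (Fin n) (Fin m) ℝ) : Matrix (Fin n) (Fin n) ℝ :=
  1 - projMat A

/-- `mu S r` is the `r`-th largest eigenvalue (1-based, with multiplicity) of the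
symmetric matrix `S`; it is `0` if `S` is not symmetric or `r ∉ {1,…,n}`. -/
noncomputable def mu {n : ℕ} (S : Matrix (Fin n) (Fin n) ℝ) (r : ℕ) : ℝ :=
  if h : S.IsHermitian ∧ 1 ≤ r ∧ r ≤ n then
    (h.1.eigenvalues ∘ Tuple.sort h.1.eigenvalues)
      (Fin.rev ⟨r - 1, by obtain ⟨-, h1, h2⟩ := h; omega⟩)
  else 0

/-! Write δ = β⁰ - β and D = λ⁰f⁰' - ΛF', so that the residual is e + W with
W = Σ_k δ_k X_k + D. Exogeneity and E e = 0 make e entrywise orthogonal to W in L², hence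
Q(β, Λ, F) = E‖e‖² + E‖W‖². If E‖W‖² = 0 then W = 0 almost surely. Sandwiching between
M_{λ⁰} and M_F kills D, and E‖M_{λ⁰} W M_F‖² is the non-collinearity quadratic form evaluated
at δ, so δ = 0; then W = D is deterministic and vanishes. -/

section Frobenius

variable {n m : ℕ}

lemma frobSq_eq_sum (A : Matrix (Fin n) (Fin m) ℝ) : frobSq A = ∑ i, ∑ j, A i j ^ 2 := by
  simp [frobSq, ← sum_hadamard_eq, sq]

lemma frobSq_nonneg (A : Matrix (Fin n) (Fin m) ℝ) : 0 ≤ frobSq A := by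
  rw [frobSq_eq_sum]
  positivity

lemma frobSq_eq_zero_iff {A : Matrix (Fin n) (Fin m) ℝ} : frobSq A = 0 ↔ A = 0 := by
  rw [frobSq_eq_sum, Fintype.sum_eq_zero_iff_of_nonneg fun i => by positivity]
  simp [funext_iff, Fintype.sum_eq_zero_iff_of_nonneg, Pi.le_def, sq_nonneg, ← Matrix.ext_iff]

lemma frobSq_add (A B : Matrix (Fin n) (Fin m) ℝ) :
    frobSq (A + B) = frobSq A + frobSq B + 2 * ∑ i, ∑ j, A i j * B i j := by
  simp only [frobSq_eq_sum, Finset.mul_sum, ← Finset.sum_add_distrib, Matrix.add_apply]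
  congr! 2
  ring

lemma frobSq_sum_smul {K : ℕ} (c : Fin K → ℝ) (Z : Fin K → Matrix (Fin n) (Fin m) ℝ) :
    frobSq (∑ k, c k • Z k) = ∑ k, ∑ l, c k * c l * trace (Z l * (Z k)ᵀ) := by
  simp [frobSq, transpose_sum, Matrix.sum_mul, Matrix.mul_sum, trace_sum, mul_assoc, Finset.mul_sum]

variable {ι κ : Type*} [Fintype ι] [Fintype κ]

lemma trace_sandwich_mul_transpose_sandwich {P : Matrix ι ι ℝ} {Q : Matrix κ κ ℝ}
    (hP : IsStarProjection P) (hQ : IsStarProjection Q) (A B : Matrix ι κ ℝ) :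
    trace (P * B * Q * (P * A * Q)ᵀ) = trace (Aᵀ * P * B * Q) := by
  have hPt : Pᵀ = P := hP.isSelfAdjoint
  have hQt : Qᵀ = Q := hQ.isSelfAdjoint
  calc trace (P * B * Q * (P * A * Q)ᵀ) = trace (P * B * (Q * Q) * Aᵀ * P) := by
        simp only [transpose_mul, hPt, hQt, Matrix.mul_assoc]
    _ = trace (P * P * B * Q * Aᵀ) := by
        rw [hQ.isIdempotentElem.eq, trace_mul_comm]
        simp only [Matrix.mul_assoc]
    _ = trace (Aᵀ * P * B * Q) := by
        rw [hP.isIdempotentElem.eq, trace_mul_comm]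
        simp only [Matrix.mul_assoc]

end Frobenius

section Projection

variable {n m : ℕ}

lemma projMat_eq_symm_starProjection (A : Matrix (Fin n) (Fin m) ℝ) :
    projMat A = (toEuclideanCLM (n := Fin n) (𝕜 := ℝ)).symm
      (LinearMap.range (toEuclideanLin A)).starProjection :=
  rfl

lemma isStarProjection_projMat (A : Matrix (Fin n) (Fin m) ℝ) : IsStarProjection (projMat A) := by
  rw [projMat_eq_symm_starProjection]
  exact isStarProjection_starProjection.map (toEuclideanCLM (n := Fin n) (𝕜 := ℝ)).symm.toStarAlgHom

lemma isStarProjection_annMat (A : Matrix (Fin n) (Fin m) ℝ) : IsStarProjection (annMat A) :=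
  (isStarProjection_projMat A).one_sub

lemma projMat_mul_self (A : Matrix (Fin n) (Fin m) ℝ) : projMat A * A = A := by
  apply toEuclideanLin.injective
  ext1 x
  have h : toEuclideanLin (projMat A * A) x = toEuclideanLin (projMat A) (toEuclideanLin A x) := by
    simp
  rw [h, ← coe_toEuclideanCLM_eq_toEuclideanLin, projMat_eq_symm_starProjection,
    StarAlgEquiv.apply_symm_apply]
  exact Submodule.starProjection_eq_self_iff.mpr (LinearMap.mem_range_self _ x)

lemma annMat_mul_self (A : Matrix (Fin n) (Fin m) ℝ) : annMat A * A = 0 := by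
  rw [annMat, Matrix.sub_mul, Matrix.one_mul, projMat_mul_self, sub_self]

lemma transpose_mul_annMat (A : Matrix (Fin n) (Fin m) ℝ) : Aᵀ * annMat A = 0 := by
  have hM : (annMat A)ᵀ = annMat A := (isStarProjection_annMat A).isSelfAdjoint
  rw [← hM, ← transpose_mul, annMat_mul_self, transpose_zero]

lemma annMat_mul_sub_mul_annMat_eq_zero {r s : ℕ} (A : Matrix (Fin n) (Fin r) ℝ)
    (B : Matrix (Fin m) (Fin r) ℝ) (C : Matrix (Fin n) (Fin s) ℝ) (D : Matrix (Fin m) (Fin s) ℝ) :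
    annMat A * (A * Bᵀ - C * Dᵀ) * annMat D = 0 := by
  rw [Matrix.mul_sub, Matrix.sub_mul, ← Matrix.mul_assoc, annMat_mul_self, Matrix.zero_mul,
    Matrix.zero_mul, Matrix.mul_assoc, Matrix.mul_assoc, transpose_mul_annMat, Matrix.mul_zero,
    Matrix.mul_zero, sub_zero]

end Projection

section Integrability

variable {Ω : Type*} [MeasurableSpace Ω] {μ : Measure Ω} {ι κ ν ρ : Type*}

lemma memLp_mul_mul_apply [Fintype κ] [Fintype ν] (C : Matrix ι κ ℝ) {A : Ω → Matrix κ ν ℝ}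
    (E : Matrix ν ρ ℝ) (hA : ∀ i j, MemLp (fun ω => A ω i j) 2 μ) (i : ι) (j : ρ) :
    MemLp (fun ω => (C * A ω * E) i j) 2 μ := by
  simp only [Matrix.mul_apply]
  exact memLp_finsetSum _ fun b _ =>
    (memLp_finsetSum _ fun a _ => (hA a b).const_mul (C i a)).mul_const (E b j)

lemma integrable_trace_transpose_mul [Fintype ι] [Fintype κ] {A B : Ω → Matrix ι κ ℝ}
    (hA : ∀ i j, MemLp (fun ω => A ω i j) 2 μ) (hB : ∀ i j, MemLp (fun ω => B ω i j) 2 μ) :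
    Integrable (fun ω => trace ((A ω)ᵀ * B ω)) μ := by
  simp only [trace, diag, Matrix.mul_apply, transpose_apply]
  exact integrable_finsetSum _ fun i _ => integrable_finsetSum _ fun j _ =>
    (hA j i).integrable_mul (hB j i)

lemma integrable_frobSq {n m : ℕ} {A : Ω → Matrix (Fin n) (Fin m) ℝ}
    (hA : ∀ i j, MemLp (fun ω => A ω i j) 2 μ) : Integrable (fun ω => frobSq (A ω)) μ := by
  simp only [frobSq_eq_sum]
  exact integrable_finsetSum _ fun i _ => integrable_finsetSum _ fun j _ => (hA i j).integrable_sq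

lemma integral_frobSq_add_of_orthogonal {n m : ℕ} {A B : Ω → Matrix (Fin n) (Fin m) ℝ}
    (hA : ∀ i j, MemLp (fun ω => A ω i j) 2 μ) (hB : ∀ i j, MemLp (fun ω => B ω i j) 2 μ)
    (horth : ∀ i j, ∫ ω, A ω i j * B ω i j ∂μ = 0) :
    ∫ ω, frobSq (A ω + B ω) ∂μ = (∫ ω, frobSq (A ω) ∂μ) + ∫ ω, frobSq (B ω) ∂μ := by
  have hAB : ∀ i j, Integrable (fun ω => A ω i j * B ω i j) μ :=
    fun i j => (hA i j).integrable_mul (hB i j)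
  have hcross : ∫ ω, ∑ i, ∑ j, A ω i j * B ω i j ∂μ = 0 := by
    rw [integral_finsetSum _ fun i _ => integrable_finsetSum _ fun j _ => hAB i j]
    refine Finset.sum_eq_zero fun i _ => ?_
    rw [integral_finsetSum _ fun j _ => hAB i j]
    exact Finset.sum_eq_zero fun j _ => horth i j
  have hfrob : Integrable (fun ω => frobSq (A ω) + frobSq (B ω)) μ :=
    (integrable_frobSq hA).add (integrable_frobSq hB)
  have hsum : Integrable (fun ω => 2 * ∑ i, ∑ j, A ω i j * B ω i j) μ :=
    (integrable_finsetSum _ fun i _ => integrable_finsetSum _ fun j _ => hAB i j).const_mul 2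
  simp only [frobSq_add]
  rw [integral_add hfrob hsum, integral_add (integrable_frobSq hA) (integrable_frobSq hB),
    integral_const_mul, hcross, mul_zero, add_zero]

end Integrability

section Model

variable {Ω : Type*} [MeasurableSpace Ω] {μ : Measure Ω} {N T K : ℕ}
  {X : Fin K → Ω → Matrix (Fin N) (Fin T) ℝ}

lemma memLp_sum_smul_add_apply [IsFiniteMeasure μ] (hX : ∀ k i t, MemLp (fun ω => X k ω i t) 2 μ)
    (δ : Fin K → ℝ) (D : Matrix (Fin N) (Fin T) ℝ) (i : Fin N) (t : Fin T) :
    MemLp (fun ω => ((∑ k, δ k • X k ω) + D) i t) 2 μ := by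
  simp only [Matrix.add_apply, Matrix.sum_apply, Matrix.smul_apply, smul_eq_mul]
  exact (memLp_finsetSum _ fun k _ => (hX k i t).const_mul (δ k)).add (memLp_const _)

lemma integral_mul_sum_smul_add_apply_eq_zero [IsFiniteMeasure μ]
    {e : Ω → Matrix (Fin N) (Fin T) ℝ} (hX : ∀ k i t, MemLp (fun ω => X k ω i t) 2 μ)
    (he : ∀ i t, MemLp (fun ω => e ω i t) 2 μ) (hmean : ∀ i t, ∫ ω, e ω i t ∂μ = 0)
    (hexo : ∀ k i t, ∫ ω, X k ω i t * e ω i t ∂μ = 0)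
    (δ : Fin K → ℝ) (D : Matrix (Fin N) (Fin T) ℝ) (i : Fin N) (t : Fin T) :
    ∫ ω, e ω i t * ((∑ k, δ k • X k ω) + D) i t ∂μ = 0 := by
  have hXe : ∀ k, Integrable (fun ω => δ k * (X k ω i t * e ω i t)) μ :=
    fun k => ((hX k i t).integrable_mul (he i t)).const_mul (δ k)
  calc ∫ ω, e ω i t * ((∑ k, δ k • X k ω) + D) i t ∂μ
      = ∫ ω, (∑ k, δ k * (X k ω i t * e ω i t)) + D i t * e ω i t ∂μ := by
        congr 1 with ω
        simp only [Matrix.add_apply, Matrix.sum_apply, Matrix.smul_apply, smul_eq_mul, mul_add,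
          Finset.mul_sum]
        congr 1
        · exact Finset.sum_congr rfl fun k _ => by ring
        · ring
    _ = ∑ k, δ k * (∫ ω, X k ω i t * e ω i t ∂μ) + D i t * ∫ ω, e ω i t ∂μ := by
        rw [integral_add (integrable_finsetSum _ fun k _ => hXe k)
          (((he i t).integrable one_le_two).const_mul _), integral_finsetSum _ fun k _ => hXe k]
        simp only [integral_const_mul]
    _ = 0 := by simp [hexo, hmean]

lemma integral_frobSq_sandwich_sum_smul (hX : ∀ k i t, MemLp (fun ω => X k ω i t) 2 μ)
    {P : Matrix (Fin N) (Fin N) ℝ} {Q : Matrix (Fin T) (Fin T) ℝ}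
    (hP : IsStarProjection P) (hQ : IsStarProjection Q) (α : Fin K → ℝ) :
    ∫ ω, frobSq (P * (∑ k, α k • X k ω) * Q) ∂μ =
      ∑ k, ∑ l, α k * α l * ∫ ω, trace ((X k ω)ᵀ * P * X l ω * Q) ∂μ := by
  have hint : ∀ k l, Integrable (fun ω => trace ((X k ω)ᵀ * P * X l ω * Q)) μ := by
    intro k l
    simpa only [Matrix.mul_assoc] using
      integrable_trace_transpose_mul (hX k) (memLp_mul_mul_apply P Q (hX l))
  have hpt : ∀ ω, frobSq (P * (∑ k, α k • X k ω) * Q) =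
      ∑ k, ∑ l, α k * α l * trace ((X k ω)ᵀ * P * X l ω * Q) := by
    intro ω
    simp only [Matrix.mul_sum, Matrix.sum_mul, Matrix.mul_smul, Matrix.smul_mul, frobSq_sum_smul,
      trace_sandwich_mul_transpose_sandwich hP hQ]
  simp only [hpt]
  rw [integral_finsetSum _ fun k _ => integrable_finsetSum _ fun l _ => (hint k l).const_mul _]
  refine Finset.sum_congr rfl fun k _ => ?_
  rw [integral_finsetSum _ fun l _ => (hint k l).const_mul _]
  simp only [integral_const_mul]

lemma eq_zero_of_integral_frobSq_eq_zero [IsFiniteMeasure μ] [NeZero μ]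
    (hX : ∀ k i t, MemLp (fun ω => X k ω i t) 2 μ)
    {P : Matrix (Fin N) (Fin N) ℝ} {Q : Matrix (Fin T) (Fin T) ℝ}
    (hP : IsStarProjection P) (hQ : IsStarProjection Q)
    (hpos : ∀ α : Fin K → ℝ, α ≠ 0 →
      0 < ∑ k, ∑ l, α k * α l * ∫ ω, trace ((X k ω)ᵀ * P * X l ω * Q) ∂μ)
    {δ : Fin K → ℝ} {D : Matrix (Fin N) (Fin T) ℝ} (hD : P * D * Q = 0)
    (h : ∫ ω, frobSq ((∑ k, δ k • X k ω) + D) ∂μ = 0) : δ = 0 ∧ D = 0 := by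
  have hW : ∀ᵐ ω ∂μ, (∑ k, δ k • X k ω) + D = 0 := by
    filter_upwards [(integral_eq_zero_iff_of_nonneg (fun ω => frobSq_nonneg _)
      (integrable_frobSq (memLp_sum_smul_add_apply hX δ D))).1 h] with ω hω
    exact frobSq_eq_zero_iff.1 hω
  have hδ : δ = 0 := by
    by_contra hδ
    have hsand : ∀ᵐ ω ∂μ, frobSq (P * (∑ k, δ k • X k ω) * Q) = 0 := by
      filter_upwards [hW] with ω hω
      rw [eq_neg_of_add_eq_zero_left hω, Matrix.mul_neg, Matrix.neg_mul, hD, neg_zero]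
      exact frobSq_eq_zero_iff.2 rfl
    have := hpos δ hδ
    rw [← integral_frobSq_sandwich_sum_smul hX hP hQ, integral_eq_zero_of_ae hsand] at this
    exact lt_irrefl _ this
  subst hδ
  obtain ⟨ω, hω⟩ := hW.exists
  simpa using hω

end Model

theorem statement0_general {N T K R R0 : ℕ}
    {Ω : Type*} [MeasurableSpace Ω] (μ : MeasureTheory.Measure Ω)
    [MeasureTheory.IsProbabilityMeasure μ]
    (lam0 : Matrix (Fin N) (Fin R0) ℝ) (f0 : Matrix (Fin T) (Fin R0) ℝ)
    (β0 : Fin K → ℝ)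
    (X : Fin K → Ω → Matrix (Fin N) (Fin T) ℝ)
    (e : Ω → Matrix (Fin N) (Fin T) ℝ)
    (Y : Ω → Matrix (Fin N) (Fin T) ℝ)
    (hY : ∀ ω, Y ω = (∑ k, β0 k • X k ω) + lam0 * f0ᵀ + e ω)
    (hX2 : ∀ k i t, MeasureTheory.MemLp (fun ω => X k ω i t) 2 μ)
    (he2 : ∀ i t, MeasureTheory.MemLp (fun ω => e ω i t) 2 μ)
    (hmean : ∀ i t, ∫ ω, e ω i t ∂μ = 0)
    (hexo : ∀ k i t, ∫ ω, X k ω i t * e ω i t ∂μ = 0)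
    (hNC : ∀ (F : Matrix (Fin T) (Fin R) ℝ) (α : Fin K → ℝ), α ≠ 0 →
      0 < ∑ k, ∑ l, α k * α l *
        ∫ ω, Matrix.trace ((X k ω)ᵀ * annMat lam0 * X l ω * annMat F) ∂μ) :
    ∀ (β : Fin K → ℝ) (Λ : Matrix (Fin N) (Fin R) ℝ) (F : Matrix (Fin T) (Fin R) ℝ),
      (∫ ω, frobSq (e ω) ∂μ) ≤ (∫ ω, frobSq (Y ω - (∑ k, β k • X k ω) - Λ * Fᵀ) ∂μ) ∧
      ((∫ ω, frobSq (Y ω - (∑ k, β k • X k ω) - Λ * Fᵀ) ∂μ) = (∫ ω, frobSq (e ω) ∂μ) ↔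
        (β = β0 ∧ Λ * Fᵀ = lam0 * f0ᵀ)) := by
  intro β Λ F
  set W : Ω → Matrix (Fin N) (Fin T) ℝ :=
    fun ω => (∑ k, (β0 - β) k • X k ω) + (lam0 * f0ᵀ - Λ * Fᵀ) with hW
  have hres : ∀ ω, Y ω - (∑ k, β k • X k ω) - Λ * Fᵀ = e ω + W ω := by
    intro ω
    simp only [hY ω, hW, Pi.sub_apply, sub_smul, Finset.sum_sub_distrib]
    abel
  have hQ : ∫ ω, frobSq (Y ω - (∑ k, β k • X k ω) - Λ * Fᵀ) ∂μ =
      (∫ ω, frobSq (e ω) ∂μ) + ∫ ω, frobSq (W ω) ∂μ := by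
    simp only [hres]
    exact integral_frobSq_add_of_orthogonal he2 (memLp_sum_smul_add_apply hX2 _ _)
      (integral_mul_sum_smul_add_apply_eq_zero hX2 he2 hmean hexo _ _)
  rw [hQ, add_eq_left]
  refine ⟨le_add_of_nonneg_right (integral_nonneg fun ω => frobSq_nonneg _), fun h => ?_, ?_⟩
  · obtain ⟨hβ, hΛF⟩ := eq_zero_of_integral_frobSq_eq_zero hX2 (isStarProjection_annMat lam0)
      (isStarProjection_annMat F) (hNC F) (annMat_mul_sub_mul_annMat_eq_zero lam0 f0 Λ F) h
    exact ⟨(sub_eq_zero.1 hβ).symm, (sub_eq_zero.1 hΛF).symm⟩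
  · rintro ⟨rfl, hΛF⟩
    simp [hW, hΛF, frobSq]

/-- Identification, Theorem 1 of the paper. Under the interactive
fixed effects model Y = Σ_k β⁰_k X_k + λ⁰f⁰' + e with (i) square-integrable entries,
(ii) E[e_{it}] = 0 and E[X_{k,it} e_{it}] = 0, (iii) the non-collinearity condition,
and (iv) R ≥ rank(λ⁰f⁰'), the population objective
Q(β,Λ,F) = E‖Y − Σ_k β_k X_k − ΛF'‖²_HS satisfies Q(β,Λ,F) ≥ E‖e‖²_HS with equality
iff β = β⁰ and ΛF' = λ⁰f⁰'; hence β⁰, λ⁰f⁰' (and R⁰ = rank(λ⁰f⁰')) are identified. -/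
theorem statement0 {N T K R R0 : ℕ}
    {Ω : Type*} [MeasurableSpace Ω] (μ : MeasureTheory.Measure Ω)
    [MeasureTheory.IsProbabilityMeasure μ]
    (lam0 : Matrix (Fin N) (Fin R0) ℝ) (f0 : Matrix (Fin T) (Fin R0) ℝ)
    (β0 : Fin K → ℝ)
    (X : Fin K → Ω → Matrix (Fin N) (Fin T) ℝ)
    (e : Ω → Matrix (Fin N) (Fin T) ℝ)
    (Y : Ω → Matrix (Fin N) (Fin T) ℝ)
    (hY : ∀ ω, Y ω = (∑ k, β0 k • X k ω) + lam0 * f0ᵀ + e ω)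
    (hX2 : ∀ k i t, MeasureTheory.MemLp (fun ω => X k ω i t) 2 μ)
    (he2 : ∀ i t, MeasureTheory.MemLp (fun ω => e ω i t) 2 μ)
    (hmean : ∀ i t, ∫ ω, e ω i t ∂μ = 0)
    (hexo : ∀ k i t, ∫ ω, X k ω i t * e ω i t ∂μ = 0)
    (hNC : ∀ (F : Matrix (Fin T) (Fin R) ℝ) (α : Fin K → ℝ), α ≠ 0 →
      0 < ∑ k, ∑ l, α k * α l *
        ∫ ω, Matrix.trace ((X k ω)ᵀ * annMat lam0 * X l ω * annMat F) ∂μ)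
    (hrank : (lam0 * f0ᵀ).rank ≤ R) :
    ∀ (β : Fin K → ℝ) (Λ : Matrix (Fin N) (Fin R) ℝ) (F : Matrix (Fin T) (Fin R) ℝ),
      (∫ ω, frobSq (e ω) ∂μ) ≤ (∫ ω, frobSq (Y ω - (∑ k, β k • X k ω) - Λ * Fᵀ) ∂μ) ∧
      ((∫ ω, frobSq (Y ω - (∑ k, β k • X k ω) - Λ * Fᵀ) ∂μ) = (∫ ω, frobSq (e ω) ∂μ) ↔
        (β = β0 ∧ Λ * Fᵀ = lam0 * f0ᵀ)) :=
  statement0_general μ lam0 f0 β0 X e Y hY hX2 he2 hmean hexo hNC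
end

section
/- Let D be a real diagonal n×n matrix, let B be a symmetric n×n matrix whose entries satisfy |B_{ij}| ≤ b for all i, j (with b ≥ 0), and let J denote the n×n all-ones matrix. Then μ_1(D + B) ≤ μ_1(D + bJ). -/
/-!
The top eigenvalue of a symmetric matrix is the maximum of `xᵀ S x` over unit vectors `x`.
Take a unit top eigenvector `x` of `D + B` and compare it with `|x|`: the diagonal terms
`D_ii x_i²` are unchanged, `B_ii x_i² ≤ b x_i²`, and every off-diagonal term satisfies
`x_i B_ij x_j ≤ b |x_i| |x_j|`. Hence `μ₁(D + B) = xᵀ(D + B)x ≤ |x|ᵀ(D + bJ)|x| ≤ μ₁(D + bJ)`.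
-/

open Matrix MeasureTheory
open scoped BigOperators

section

variable {ι : Type*} [Fintype ι]

lemma dotProduct_mulVec_le_abs_dotProduct_mulVec_abs {A C : Matrix ι ι ℝ}
    (hdiag : ∀ i, A i i ≤ C i i) (hoff : ∀ i j, i ≠ j → |A i j| ≤ C i j) (x : ι → ℝ) :
    x ⬝ᵥ (A *ᵥ x) ≤ |x| ⬝ᵥ (C *ᵥ |x|) := by
  simp only [dotProduct, mulVec, Finset.mul_sum, Pi.abs_apply]
  refine Finset.sum_le_sum fun i _ => Finset.sum_le_sum fun j _ => ?_
  rcases eq_or_ne i j with rfl | hij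
  · calc x i * (A i i * x i) = A i i * (x i * x i) := by ring
      _ ≤ C i i * (x i * x i) := mul_le_mul_of_nonneg_right (hdiag i) (mul_self_nonneg _)
      _ = |x i| * (C i i * |x i|) := by rw [← abs_mul_abs_self (x i)]; ring
  · calc x i * (A i j * x j) ≤ |x i * (A i j * x j)| := le_abs_self _
      _ = |x i| * (|A i j| * |x j|) := by rw [abs_mul, abs_mul]
      _ ≤ |x i| * (C i j * |x j|) := by gcongr; exact hoff i j hij

namespace Matrix.IsHermitian

variable [DecidableEq ι] {S : Matrix ι ι ℝ} (hS : S.IsHermitian)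
include hS

lemma dotProduct_mulVec_le_of_eigenvalues_le {c : ℝ} (hc : ∀ i, hS.eigenvalues i ≤ c)
    (x : ι → ℝ) : x ⬝ᵥ (S *ᵥ x) ≤ c * (x ⬝ᵥ x) := by
  set U : Matrix ι ι ℝ := (hS.eigenvectorUnitary : Matrix ι ι ℝ)
  -- `y` is `x` in eigenvector coordinates: `xᵀ S x = ∑ λᵢ yᵢ²` and `y ⬝ᵥ y = x ⬝ᵥ x`.
  set y := star U *ᵥ x
  have hxU : x ᵥ* U = y := by
    rw [← mulVec_transpose]; rfl
  have hSx : x ⬝ᵥ (S *ᵥ x) = y ⬝ᵥ (diagonal hS.eigenvalues *ᵥ y) := by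
    conv_lhs => rw [hS.spectral_theorem, Unitary.conjStarAlgAut_apply]
    rw [← mulVec_mulVec, ← mulVec_mulVec, dotProduct_mulVec, hxU]
    rfl
  have hyy : y ⬝ᵥ y = x ⬝ᵥ x := by
    rw [← hxU, ← dotProduct_mulVec, hxU, mulVec_mulVec,
      Unitary.mul_star_self_of_mem hS.eigenvectorUnitary.2, one_mulVec]
  rw [hSx, ← hyy]
  simp only [dotProduct, mulVec_diagonal, Finset.mul_sum]
  refine Finset.sum_le_sum fun i _ => ?_
  nlinarith [hc i, mul_self_nonneg (y i)]

lemma dotProduct_eigenvectorBasis_self (j : ι) :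
    ⇑(hS.eigenvectorBasis j) ⬝ᵥ ⇑(hS.eigenvectorBasis j) = 1 := by
  have h := hS.eigenvectorBasis.inner_eq_one j
  rwa [EuclideanSpace.inner_eq_star_dotProduct, star_trivial] at h

lemma dotProduct_mulVec_eigenvectorBasis (j : ι) :
    ⇑(hS.eigenvectorBasis j) ⬝ᵥ (S *ᵥ ⇑(hS.eigenvectorBasis j)) = hS.eigenvalues j := by
  rw [hS.mulVec_eigenvectorBasis, dotProduct_smul, hS.dotProduct_eigenvectorBasis_self,
    smul_eq_mul, mul_one]

end Matrix.IsHermitian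

end

section

variable {n : ℕ} {S : Matrix (Fin n) (Fin n) ℝ}

lemma mu_one_eq_eigenvalues (hS : S.IsHermitian) (hn : 0 < n) :
    mu S 1 = hS.eigenvalues (Tuple.sort hS.eigenvalues (Fin.rev ⟨0, hn⟩)) := by
  rw [mu, dif_pos ⟨hS, le_refl 1, hn⟩]; rfl

lemma eigenvalues_le_mu_one (hS : S.IsHermitian) (i : Fin n) : hS.eigenvalues i ≤ mu S 1 := by
  have hn : 0 < n := i.pos
  rw [mu_one_eq_eigenvalues hS hn]
  -- `Tuple.sort` lists the eigenvalues increasingly, so the last position holds the largest.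
  have hi : hS.eigenvalues i
      = (hS.eigenvalues ∘ Tuple.sort hS.eigenvalues) ((Tuple.sort hS.eigenvalues)⁻¹ i) := by simp
  rw [hi]
  exact Tuple.monotone_sort hS.eigenvalues (by rw [Fin.le_def]; simp [Fin.rev]; omega)

lemma mu_one_le_mu_one_of_le_of_abs_le {A C : Matrix (Fin n) (Fin n) ℝ}
    (hA : A.IsHermitian) (hC : C.IsHermitian) (hdiag : ∀ i, A i i ≤ C i i)
    (hoff : ∀ i j, i ≠ j → |A i j| ≤ C i j) : mu A 1 ≤ mu C 1 := by
  rcases Nat.eq_zero_or_pos n with rfl | hn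
  · simp [mu]
  set x := ⇑(hA.eigenvectorBasis (Tuple.sort hA.eigenvalues (Fin.rev ⟨0, hn⟩)))
  have hxx : |x| ⬝ᵥ |x| = 1 := by
    rw [← hA.dotProduct_eigenvectorBasis_self]
    exact Finset.sum_congr rfl fun i _ => abs_mul_abs_self (x i)
  calc mu A 1 = x ⬝ᵥ (A *ᵥ x) := by
        rw [mu_one_eq_eigenvalues hA hn, hA.dotProduct_mulVec_eigenvectorBasis]
    _ ≤ |x| ⬝ᵥ (C *ᵥ |x|) := dotProduct_mulVec_le_abs_dotProduct_mulVec_abs hdiag hoff x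
    _ ≤ mu C 1 * (|x| ⬝ᵥ |x|) :=
        hC.dotProduct_mulVec_le_of_eigenvalues_le (eigenvalues_le_mu_one hC) |x|
    _ = mu C 1 := by rw [hxx, mul_one]

end

theorem statement10_general {n : ℕ} (D B : Matrix (Fin n) (Fin n) ℝ) (b : ℝ)
    (hD : D.IsDiag) (hB : B.IsHermitian)
    (hBb : ∀ i j, |B i j| ≤ b) :
    mu (D + B) 1 ≤ mu (D + b • Matrix.of fun (_ _ : Fin n) => (1 : ℝ)) 1 := by
  have hDh : D.IsHermitian := isHermitian_iff_isSymm.mpr hD.isSymm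
  have hJ : (b • Matrix.of fun (_ _ : Fin n) => (1 : ℝ)).IsHermitian := by
    ext i j; simp
  refine mu_one_le_mu_one_of_le_of_abs_le (hDh.add hB) (hDh.add hJ) (fun i => ?_)
    (fun i j hij => ?_)
  · simpa using (abs_le.mp (hBb i i)).2
  · simpa [hD hij] using hBb i j

/-- If D is diagonal, B is symmetric with |B_{ij}| ≤ b (b ≥ 0), and
J is the all-ones matrix, then μ_1(D+B) ≤ μ_1(D+bJ). -/
theorem statement10 {n : ℕ} (D B : Matrix (Fin n) (Fin n) ℝ) (b : ℝ)
    (hD : D.IsDiag) (hB : B.IsHermitian) (hb : 0 ≤ b)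
    (hBb : ∀ i j, |B i j| ≤ b) :
    mu (D + B) 1 ≤ mu (D + b • Matrix.of fun (_ _ : Fin n) => (1 : ℝ)) 1 :=
  statement10_general D B b hD hB hBb
end

section
/- Let A and B be symmetric n×n matrices. Let ν_1,…,ν_n be orthonormal eigenvectors of A with A ν_i = μ_i(A) ν_i and μ_1(A) ≥ … ≥ μ_n(A), let ν̃_1,…,ν̃_n be orthonormal eigenvectors of A+B with (A+B) ν̃_i = μ_i(A+B) ν̃_i, and set b = max_{i,j=1,…,n} |ν_i' B ν_j|. Let R < n and suppose that |μ_r(A+B) − μ_r(A)| ≤ c₁ for all r ∈ {1,…,R+1} and that μ_r(A) − μ_{r+1}(A) ≥ c₂ > 0 for all r ∈ {1,…,R}. Then for every r ∈ {1,…,R} one has 1 − (ν_r' ν̃_r)² ≤ (4^r − 1)(b + c₁)/(3 c₂); consequently, if additionally ν_r' ν̃_r ≥ 0, then ‖ν̃_r − ν_r‖² ≤ 2(4^r − 1)(b + c₁)/(3 c₂). -/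
open Matrix MeasureTheory
open scoped BigOperators

/-!
Put `p k m = (ν_k' ν̃_m)²`. Both families are orthonormal bases, so `p` is doubly stochastic, and
`Σ_m μ_m(A+B) p k m = ν_k'(A+B)ν_k = μ_k(A) + ν_k' B ν_k ≥ μ_k(A) - b`. Summing this over `k ≤ r`
and bounding the left side through `|μ_m(A+B) - μ_m(A)| ≤ c₁` shows that the mass
`D_r = Σ_{m > r} Σ_{k ≤ r} p k m` which the top `r` eigenvectors of `A` put on the lower
eigenvectors of `A + B` satisfies `c₂ D_r ≤ r (b + c₁)`. Then
`1 - p r r = Σ_{m < r} p r m + Σ_{m > r} p r m`, where the second sum is at most `D_r` and, column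
`m` summing to one, `p r m ≤ 1 - p m m`; strong induction on `r` with
`Σ_{m < r} (4^m - 1) + 3 r ≤ 4^r - 1` gives the first bound. The second follows from
`‖ν̃ - ν‖² = 2 - 2 ν'ν̃ ≤ 2 (1 - (ν'ν̃)²)` for unit vectors with `ν'ν̃ ≥ 0`.
-/

open Finset

/-- Orthonormality of vectors `w 1, …, w n` of `ℝⁿ` (indexed from `1`, as in the paper); such a
family is an orthonormal basis. -/
def OrthonormalOnIcc (n : ℕ) (w : ℕ → Fin n → ℝ) : Prop :=
  ∀ i ∈ Icc 1 n, ∀ j ∈ Icc 1 n, w i ⬝ᵥ w j = if i = j then (1 : ℝ) else 0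

theorem sum_Icc_one_eq_sum_fin {M : Type*} [AddCommMonoid M] (n : ℕ) (f : ℕ → M) :
    ∑ m ∈ Icc 1 n, f m = ∑ i : Fin n, f (i + 1) := by
  rw [Fin.sum_univ_eq_sum_range (fun i => f (i + 1)), Finset.range_eq_Ico,
    Finset.sum_Ico_add' f 0 n 1]
  rfl

theorem sum_Icc_one_eq_add_sum_Ioc {M : Type*} [AddCommMonoid M] {r n : ℕ} (hrn : r ≤ n)
    (f : ℕ → M) : ∑ m ∈ Icc 1 n, f m = ∑ m ∈ Icc 1 r, f m + ∑ m ∈ Ioc r n, f m := by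
  have hIcc (k : ℕ) : Icc 1 k = Ioc 0 k := Finset.Icc_add_one_left_eq_Ioc 0 k
  rw [hIcc, hIcc, Finset.sum_Ioc_consecutive f (Nat.zero_le r) hrn]

namespace OrthonormalOnIcc

variable {n : ℕ} {w : ℕ → Fin n → ℝ}

theorem sum_dotProduct_smul (hw : OrthonormalOnIcc n w) (x : Fin n → ℝ) :
    ∑ m ∈ Icc 1 n, (w m ⬝ᵥ x) • w m = x := by
  set M : Matrix (Fin n) (Fin n) ℝ := Matrix.of fun i => w (i + 1)
  have hMMt : M * Mᵀ = 1 := by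
    ext i j
    have := hw (i + 1) (by simp) (j + 1) (by simp)
    simpa [Matrix.mul_apply, Matrix.one_apply, M, dotProduct, Fin.val_inj] using this
  calc ∑ m ∈ Icc 1 n, (w m ⬝ᵥ x) • w m = Mᵀ *ᵥ (M *ᵥ x) := by
        rw [mulVec_transpose, vecMul_eq_sum, sum_Icc_one_eq_sum_fin]; rfl
    _ = x := by rw [mulVec_mulVec, mul_eq_one_comm.mp hMMt, one_mulVec]

theorem sum_dotProduct_mul_dotProduct (hw : OrthonormalOnIcc n w) (x y : Fin n → ℝ) :
    ∑ m ∈ Icc 1 n, (x ⬝ᵥ w m) * (y ⬝ᵥ w m) = x ⬝ᵥ y := by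
  conv_rhs => rw [← hw.sum_dotProduct_smul y]
  simp only [dotProduct_sum, dotProduct_smul, smul_eq_mul, dotProduct_comm y]
  exact sum_congr rfl fun m _ => mul_comm _ _

theorem dotProduct_mulVec_eq_sum (hw : OrthonormalOnIcc n w) {S : Matrix (Fin n) (Fin n) ℝ}
    {μ : ℕ → ℝ} (hS : ∀ m ∈ Icc 1 n, S *ᵥ w m = μ m • w m) (x : Fin n → ℝ) :
    x ⬝ᵥ S *ᵥ x = ∑ m ∈ Icc 1 n, μ m * (x ⬝ᵥ w m) ^ 2 := by
  nth_rewrite 2 [← hw.sum_dotProduct_smul x]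
  simp only [mulVec_sum, mulVec_smul, dotProduct_sum]
  refine sum_congr rfl fun m hm => ?_
  rw [hS m hm, smul_smul, dotProduct_smul, smul_eq_mul, dotProduct_comm (w m)]
  ring

theorem dotProduct_self (hw : OrthonormalOnIcc n w) {k : ℕ} (hk : k ∈ Icc 1 n) :
    w k ⬝ᵥ w k = 1 := by
  simpa using hw k hk k hk

theorem sum_sq_dotProduct (hw : OrthonormalOnIcc n w) {u : ℕ → Fin n → ℝ}
    (hu : OrthonormalOnIcc n u) {k : ℕ} (hk : k ∈ Icc 1 n) :
    ∑ m ∈ Icc 1 n, (u k ⬝ᵥ w m) ^ 2 = 1 := by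
  simpa [sq, hu k hk k hk] using hw.sum_dotProduct_mul_dotProduct (u k) (u k)

theorem sum_mul_sq_dotProduct_eq_add (hw : OrthonormalOnIcc n w)
    {A B : Matrix (Fin n) (Fin n) ℝ} {μ : ℕ → ℝ} (hAB : ∀ m ∈ Icc 1 n, (A + B) *ᵥ w m = μ m • w m)
    {v : Fin n → ℝ} (hv : v ⬝ᵥ v = 1) {a : ℝ} (hAv : A *ᵥ v = a • v) :
    ∑ m ∈ Icc 1 n, μ m * (v ⬝ᵥ w m) ^ 2 = a + v ⬝ᵥ B *ᵥ v := by
  rw [← hw.dotProduct_mulVec_eq_sum hAB, add_mulVec, dotProduct_add, hAv, dotProduct_smul, hv,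
    smul_eq_mul, mul_one]

end OrthonormalOnIcc

theorem gap_mul_tail_mass_le {n r : ℕ} (hrn : r ≤ n) {p : ℕ → ℕ → ℝ} (hp : ∀ k m, 0 ≤ p k m)
    (hrow : ∀ k ∈ Icc 1 r, ∑ m ∈ Icc 1 n, p k m = 1)
    (hcol : ∀ m ∈ Icc 1 r, ∑ k ∈ Icc 1 n, p k m ≤ 1)
    {μ μ' : ℕ → ℝ} (hμ : ∀ m ∈ Icc 1 r, μ r ≤ μ m) (hμ' : ∀ m ∈ Ioc r n, μ' m ≤ μ' (r + 1))
    {b c : ℝ} (hmix : ∀ k ∈ Icc 1 r, μ k - b ≤ ∑ m ∈ Icc 1 n, μ' m * p k m)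
    (hc : ∀ m ∈ Icc 1 (r + 1), μ' m - μ m ≤ c) :
    (μ r - μ (r + 1)) * ∑ m ∈ Ioc r n, ∑ k ∈ Icc 1 r, p k m ≤ r * (b + c) := by
  set β : ℕ → ℝ := fun m => ∑ k ∈ Icc 1 r, p k m
  have hβ0 (m : ℕ) : 0 ≤ β m := sum_nonneg fun k _ => hp k m
  have hmass : ∑ m ∈ Icc 1 r, β m + ∑ m ∈ Ioc r n, β m = r := by
    rw [← sum_Icc_one_eq_add_sum_Ioc hrn, sum_comm, sum_congr rfl hrow]
    simp
  have head : ∀ m ∈ Icc 1 r, μ' m * β m ≤ μ m - μ r + (μ r + c) * β m := by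
    intro m hm
    have hm' : m ∈ Icc 1 (r + 1) := by simp only [mem_Icc] at hm ⊢; omega
    have hβ1 : β m ≤ 1 := (sum_le_sum_of_subset_of_nonneg (Icc_subset_Icc_right hrn)
      fun k _ _ => hp k m).trans (hcol m hm)
    -- `μ m * β m ≤ μ m - (1 - β m) * μ r` since `β m ≤ 1` and `μ r ≤ μ m`
    nlinarith [hc m hm', hμ m hm, hβ0 m]
  have tail : ∀ m ∈ Ioc r n, μ' m * β m ≤ (μ r + c) * β m - (μ r - μ (r + 1)) * β m := by
    intro m hm
    nlinarith [hμ' m hm, hc (r + 1) (by simp), hβ0 m]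
  have hcard : ∑ k ∈ Icc 1 r, b = r * b := by simp
  have chain := calc
    ∑ k ∈ Icc 1 r, μ k - r * b ≤ ∑ k ∈ Icc 1 r, ∑ m ∈ Icc 1 n, μ' m * p k m := by
      rw [← hcard, ← sum_sub_distrib]; exact sum_le_sum hmix
    _ = ∑ m ∈ Icc 1 r, μ' m * β m + ∑ m ∈ Ioc r n, μ' m * β m := by
      simp only [β, mul_sum]; rw [sum_comm, sum_Icc_one_eq_add_sum_Ioc hrn]
    _ ≤ ∑ m ∈ Icc 1 r, (μ m - μ r + (μ r + c) * β m)
          + ∑ m ∈ Ioc r n, ((μ r + c) * β m - (μ r - μ (r + 1)) * β m) :=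
      add_le_add (sum_le_sum head) (sum_le_sum tail)
    _ = ∑ k ∈ Icc 1 r, μ k - r * μ r + (μ r + c) * r
          - (μ r - μ (r + 1)) * ∑ m ∈ Ioc r n, β m := by
      simp only [sum_add_distrib, sum_sub_distrib, sum_const, Nat.card_Icc, add_tsub_cancel_right,
        nsmul_eq_mul, ← mul_sum]
      linear_combination (μ r + c) * hmass
  linarith

theorem sum_Ico_four_pow_sub_one_add_le {r : ℕ} (hr : 1 ≤ r) :
    ∑ m ∈ Ico 1 r, ((4 : ℝ) ^ m - 1) + 3 * r ≤ 4 ^ r - 1 := by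
  induction r, hr using Nat.le_induction with
  | base => norm_num
  | succ k hk ih =>
    rw [sum_Ico_succ_top hk, pow_succ]
    push_cast
    nlinarith [one_le_pow₀ (M₀ := ℝ) (n := k) (by norm_num : (1 : ℝ) ≤ 4)]

theorem one_sub_diag_le_of_tail_le {n R : ℕ} (hRn : R ≤ n) {p : ℕ → ℕ → ℝ} (hp : ∀ k m, 0 ≤ p k m)
    (hrow : ∀ k ∈ Icc 1 R, ∑ m ∈ Icc 1 n, p k m = 1)
    (hcol : ∀ m ∈ Icc 1 R, ∑ k ∈ Icc 1 n, p k m ≤ 1) {q : ℝ}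
    (htail : ∀ r ∈ Icc 1 R, ∑ m ∈ Ioc r n, p r m ≤ 3 * r * q) :
    ∀ r ∈ Icc 1 R, 1 - p r r ≤ (4 ^ r - 1) * q := by
  intro r
  induction r using Nat.strong_induction_on with
  | _ r ih =>
  intro hr
  obtain ⟨hr1, hrR⟩ := mem_Icc.mp hr
  have hq : 0 ≤ q := by
    have h1 := htail 1 (mem_Icc.mpr ⟨le_rfl, by omega⟩)
    rw [Nat.cast_one] at h1
    linarith [sum_nonneg fun m (_ : m ∈ Ioc 1 n) => hp 1 m]
  have hsplit : 1 - p r r = ∑ m ∈ Ico 1 r, p r m + ∑ m ∈ Ioc r n, p r m := by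
    rw [← hrow r hr, sum_Icc_one_eq_add_sum_Ioc (hrR.trans hRn), ← Ico_add_one_right_eq_Icc,
      sum_Ico_succ_top hr1]
    ring
  have head : ∀ m ∈ Ico 1 r, p r m ≤ (4 ^ m - 1) * q := by
    intro m hm
    obtain ⟨hm1, hmr⟩ := mem_Ico.mp hm
    have hmR : m ∈ Icc 1 R := mem_Icc.mpr ⟨hm1, by omega⟩
    have hpair : p r m + p m m ≤ 1 := by
      refine le_trans ?_ (hcol m hmR)
      rw [← sum_pair (f := fun k => p k m) hmr.ne']
      refine sum_le_sum_of_subset_of_nonneg ?_ fun k _ _ => hp k m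
      intro k
      simp only [mem_insert, mem_singleton, mem_Icc]
      omega
    linarith [ih m hmr hmR]
  calc 1 - p r r ≤ ∑ m ∈ Ico 1 r, (4 ^ m - 1) * q + 3 * r * q := by
        rw [hsplit]; exact add_le_add (sum_le_sum head) (htail r hr)
    _ ≤ (4 ^ r - 1) * q := by
        rw [← sum_mul]
        nlinarith [mul_le_mul_of_nonneg_right (sum_Ico_four_pow_sub_one_add_le hr1) hq]

theorem one_sub_diag_le_of_gap {n R : ℕ} (hRn : R < n) {p : ℕ → ℕ → ℝ}
    (hp : ∀ k m, 0 ≤ p k m) (hrow : ∀ k ∈ Icc 1 n, ∑ m ∈ Icc 1 n, p k m = 1)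
    (hcol : ∀ m ∈ Icc 1 n, ∑ k ∈ Icc 1 n, p k m ≤ 1) {μ μ' : ℕ → ℝ}
    (hμ : AntitoneOn μ (Set.Icc 1 n)) (hμ' : AntitoneOn μ' (Set.Icc 1 n)) {b c₁ c₂ : ℝ}
    (hc₂ : 0 < c₂) (hmix : ∀ k ∈ Icc 1 n, μ k - b ≤ ∑ m ∈ Icc 1 n, μ' m * p k m)
    (hc₁ : ∀ m ∈ Icc 1 (R + 1), μ' m - μ m ≤ c₁)
    (hgap : ∀ r ∈ Icc 1 R, c₂ ≤ μ r - μ (r + 1)) :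
    ∀ r ∈ Icc 1 R, 1 - p r r ≤ (4 ^ r - 1) * (b + c₁) / (3 * c₂) := by
  have hIcc {k N : ℕ} (hk : k ∈ Icc 1 N) (hN : N ≤ n) : k ∈ Icc 1 n := by
    simp only [mem_Icc] at hk ⊢; omega
  have htail (r : ℕ) (hr : r ∈ Icc 1 R) :
      ∑ m ∈ Ioc r n, p r m ≤ 3 * r * ((b + c₁) / (3 * c₂)) := by
    obtain ⟨hr1, hrR⟩ := mem_Icc.mp hr
    have hD := gap_mul_tail_mass_le (hrR.trans hRn.le) hp
      (fun k hk => hrow k (hIcc hk (by omega))) (fun m hm => hcol m (hIcc hm (by omega)))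
      (fun m hm => by
        obtain ⟨hm1, hmr⟩ := mem_Icc.mp hm; exact hμ ⟨hm1, by omega⟩ ⟨hr1, by omega⟩ hmr)
      (fun m hm => hμ' ⟨by omega, by omega⟩ ⟨by linarith [(mem_Ioc.mp hm).1], (mem_Ioc.mp hm).2⟩
        (mem_Ioc.mp hm).1)
      (fun k hk => hmix k (hIcc hk (by omega)))
      (fun m hm => hc₁ m (by simp only [mem_Icc] at hm ⊢; omega))
    have hrow_le : ∑ m ∈ Ioc r n, p r m ≤ ∑ m ∈ Ioc r n, ∑ k ∈ Icc 1 r, p k m :=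
      sum_le_sum fun m _ => single_le_sum (fun k _ => hp k m) (mem_Icc.mpr ⟨hr1, le_rfl⟩)
    have hD0 : 0 ≤ ∑ m ∈ Ioc r n, ∑ k ∈ Icc 1 r, p k m :=
      sum_nonneg fun m _ => sum_nonneg fun k _ => hp k m
    have hq : 3 * (r : ℝ) * ((b + c₁) / (3 * c₂)) = r * (b + c₁) / c₂ := by field_simp
    rw [hq, le_div_iff₀ hc₂]
    nlinarith [hgap r hr]
  intro r hr
  rw [mul_div_assoc]
  exact one_sub_diag_le_of_tail_le hRn.le hp (fun k hk => hrow k (hIcc hk hRn.le))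
    (fun m hm => hcol m (hIcc hm hRn.le)) htail r hr

theorem mu_antitoneOn {n : ℕ} (S : Matrix (Fin n) (Fin n) ℝ) : AntitoneOn (mu S) (Set.Icc 1 n) := by
  rintro i ⟨hi, -⟩ j ⟨-, hj⟩ hij
  unfold mu
  by_cases hS : S.IsHermitian
  · rw [dif_pos ⟨hS, by omega, hj⟩, dif_pos ⟨hS, hi, by omega⟩]
    exact Tuple.monotone_sort _ (Fin.rev_le_rev.mpr (Fin.mk_le_mk.mpr (by omega)))
  · rw [dif_neg (fun h => hS h.1), dif_neg (fun h => hS h.1)]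

theorem sum_sub_sq_eq_two_sub_dotProduct {n : ℕ} {u v : Fin n → ℝ} (hu : u ⬝ᵥ u = 1)
    (hv : v ⬝ᵥ v = 1) : ∑ i, (v i - u i) ^ 2 = 2 - 2 * (u ⬝ᵥ v) := by
  have hsq : ∑ i, (v i - u i) ^ 2 = (v - u) ⬝ᵥ (v - u) := by simp [dotProduct, sq]
  rw [hsq, sub_dotProduct, dotProduct_sub, dotProduct_sub, hu, hv, dotProduct_comm v u]
  ring

theorem sum_sub_sq_le_two_mul_one_sub_sq {n : ℕ} {u v : Fin n → ℝ} (hu : u ⬝ᵥ u = 1)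
    (hv : v ⬝ᵥ v = 1) (huv : 0 ≤ u ⬝ᵥ v) : ∑ i, (v i - u i) ^ 2 ≤ 2 * (1 - (u ⬝ᵥ v) ^ 2) := by
  have hdist := sum_sub_sq_eq_two_sub_dotProduct hu hv
  have huv1 : u ⬝ᵥ v ≤ 1 := by nlinarith [sum_nonneg fun i (_ : i ∈ univ) => sq_nonneg (v i - u i)]
  rw [hdist]
  nlinarith [mul_nonneg huv (sub_nonneg.mpr huv1)]

theorem statement12_general {n : ℕ} (A B : Matrix (Fin n) (Fin n) ℝ)
    (ν νt : ℕ → (Fin n → ℝ))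
    (hortho : ∀ i ∈ Finset.Icc 1 n, ∀ j ∈ Finset.Icc 1 n,
      ν i ⬝ᵥ ν j = if i = j then (1 : ℝ) else 0)
    (heig : ∀ i ∈ Finset.Icc 1 n, A.mulVec (ν i) = mu A i • ν i)
    (horthot : ∀ i ∈ Finset.Icc 1 n, ∀ j ∈ Finset.Icc 1 n,
      νt i ⬝ᵥ νt j = if i = j then (1 : ℝ) else 0)
    (heigt : ∀ i ∈ Finset.Icc 1 n, (A + B).mulVec (νt i) = mu (A + B) i • νt i)
    (b : ℝ)
    (hb : IsGreatest {x : ℝ | ∃ i ∈ Finset.Icc 1 n, ∃ j ∈ Finset.Icc 1 n,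
      x = |ν i ⬝ᵥ B.mulVec (ν j)|} b)
    (R : ℕ) (hR : R < n)
    (c₁ c₂ : ℝ) (hc₂ : 0 < c₂)
    (hc₁ : ∀ r ∈ Finset.Icc 1 (R + 1), |mu (A + B) r - mu A r| ≤ c₁)
    (hgap : ∀ r ∈ Finset.Icc 1 R, c₂ ≤ mu A r - mu A (r + 1)) :
    ∀ r ∈ Finset.Icc 1 R,
      1 - (ν r ⬝ᵥ νt r) ^ 2 ≤ ((4 : ℝ) ^ r - 1) * (b + c₁) / (3 * c₂) ∧
      (0 ≤ ν r ⬝ᵥ νt r →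
        ∑ i : Fin n, (νt r i - ν r i) ^ 2 ≤ 2 * ((4 : ℝ) ^ r - 1) * (b + c₁) / (3 * c₂)) := by
  have hν : OrthonormalOnIcc n ν := hortho
  have hνt : OrthonormalOnIcc n νt := horthot
  set p : ℕ → ℕ → ℝ := fun k m => (ν k ⬝ᵥ νt m) ^ 2
  have hrow (k : ℕ) (hk : k ∈ Icc 1 n) : ∑ m ∈ Icc 1 n, p k m = 1 := hνt.sum_sq_dotProduct hν hk
  have hcol (m : ℕ) (hm : m ∈ Icc 1 n) : ∑ k ∈ Icc 1 n, p k m ≤ 1 := by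
    simpa only [p, dotProduct_comm] using (hν.sum_sq_dotProduct hνt hm).le
  have hmix (k : ℕ) (hk : k ∈ Icc 1 n) : mu A k - b ≤ ∑ m ∈ Icc 1 n, mu (A + B) m * p k m := by
    rw [hνt.sum_mul_sq_dotProduct_eq_add heigt (hν.dotProduct_self hk) (heig k hk)]
    linarith [neg_le_of_abs_le (hb.2 ⟨k, hk, k, hk, rfl⟩)]
  intro r hr
  have hdiag : 1 - p r r ≤ (4 ^ r - 1) * (b + c₁) / (3 * c₂) :=
    one_sub_diag_le_of_gap hR (fun _ _ => sq_nonneg _) hrow hcol (mu_antitoneOn A)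
      (mu_antitoneOn (A + B)) hc₂ hmix (fun m hm => (abs_le.mp (hc₁ m hm)).2) hgap r hr
  have hr' : r ∈ Icc 1 n := by simp only [mem_Icc] at hr ⊢; omega
  refine ⟨hdiag, fun hg => ?_⟩
  calc ∑ i, (νt r i - ν r i) ^ 2 ≤ 2 * (1 - (ν r ⬝ᵥ νt r) ^ 2) :=
        sum_sub_sq_le_two_mul_one_sub_sq (hν.dotProduct_self hr') (hνt.dotProduct_self hr') hg
    _ ≤ _ := by rw [mul_assoc, mul_div_assoc]; linarith

/-- eigenvector perturbation bound. With A, B symmetric, ν (resp. ν̃)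
orthonormal eigenvectors of A (resp. A+B) for the decreasingly ordered eigenvalues,
b = max_{i,j} |ν_i' B ν_j|, R < n, |μ_r(A+B) − μ_r(A)| ≤ c₁ for r ≤ R+1 and
μ_r(A) − μ_{r+1}(A) ≥ c₂ > 0 for r ≤ R: for each r ∈ {1,…,R},
1 − (ν_r'ν̃_r)² ≤ (4^r − 1)(b+c₁)/(3c₂); if moreover ν_r'ν̃_r ≥ 0 then
‖ν̃_r − ν_r‖² ≤ 2(4^r − 1)(b+c₁)/(3c₂). -/
theorem statement12 {n : ℕ} (A B : Matrix (Fin n) (Fin n) ℝ)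
    (hA : A.IsHermitian) (hB : B.IsHermitian)
    (ν νt : ℕ → (Fin n → ℝ))
    (hortho : ∀ i ∈ Finset.Icc 1 n, ∀ j ∈ Finset.Icc 1 n,
      ν i ⬝ᵥ ν j = if i = j then (1 : ℝ) else 0)
    (heig : ∀ i ∈ Finset.Icc 1 n, A.mulVec (ν i) = mu A i • ν i)
    (horthot : ∀ i ∈ Finset.Icc 1 n, ∀ j ∈ Finset.Icc 1 n,
      νt i ⬝ᵥ νt j = if i = j then (1 : ℝ) else 0)
    (heigt : ∀ i ∈ Finset.Icc 1 n, (A + B).mulVec (νt i) = mu (A + B) i • νt i)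
    (b : ℝ)
    (hb : IsGreatest {x : ℝ | ∃ i ∈ Finset.Icc 1 n, ∃ j ∈ Finset.Icc 1 n,
      x = |ν i ⬝ᵥ B.mulVec (ν j)|} b)
    (R : ℕ) (hR : R < n)
    (c₁ c₂ : ℝ) (hc₂ : 0 < c₂)
    (hc₁ : ∀ r ∈ Finset.Icc 1 (R + 1), |mu (A + B) r - mu A r| ≤ c₁)
    (hgap : ∀ r ∈ Finset.Icc 1 R, c₂ ≤ mu A r - mu A (r + 1)) :
    ∀ r ∈ Finset.Icc 1 R,
      1 - (ν r ⬝ᵥ νt r) ^ 2 ≤ ((4 : ℝ) ^ r - 1) * (b + c₁) / (3 * c₂) ∧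
      (0 ≤ ν r ⬝ᵥ νt r →
        ∑ i : Fin n, (νt r i - ν r i) ^ 2 ≤ 2 * ((4 : ℝ) ^ r - 1) * (b + c₁) / (3 * c₂)) :=
  statement12_general A B ν νt hortho heig horthot heigt b hb R hR c₁ c₂ hc₂ hc₁ hgap
end

section
/- Let κ ≥ 1 and 0 < ε ≤ (1/2)^{1/3} be real numbers and set a = ε²/κ². Define g(a,κ) = (1/2)·[1 + κ² + κ/√a + sqrt((1 + κ² + κ/√a)² − 4κ²)] (the expression under the square root is nonnegative since 1 + κ² ≥ 2κ). Then g(a,κ) − ((1 + a²)/√a)·κ − κ² > 0. -/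
/-!
Write `K = κ²`. Since `√a = ε/κ`, the claim reads `g > R` with `R = K/ε + ε³/K + K`, where
`g` is the larger root of `x² - S x + K` and `S = 1 + K + K/ε`. A point at which a monic
quadratic is negative lies strictly between its roots, so it suffices that
`R (S - R) - K = (K/ε - ε² - ε³) + (ε³/K)(1 - ε³/K)` be positive. For `K ≥ 1` and
`ε³ ≤ 1/2` both summands are: the first is at least `(1 - ε³ - ε⁴)/ε`, the second is
nonnegative because `ε³/K ≤ 1/2`.
-/

lemma lt_larger_root_of_eval_neg {S P R : ℝ} (hR : R ^ 2 - S * R + P < 0) :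
    R < (S + √(S ^ 2 - 4 * P)) / 2 := by
  have hsqrt : |2 * R - S| < √(S ^ 2 - 4 * P) := by
    rw [← Real.sqrt_sq_eq_abs]
    exact Real.sqrt_lt_sqrt (sq_nonneg _) (by nlinarith)
  linarith [le_abs_self (2 * R - S)]

lemma quadratic_eval_neg_of_one_le_of_pow_three_le {K ε : ℝ} (hK : 1 ≤ K) (hε : 0 < ε)
    (hε3 : ε ^ 3 ≤ 1 / 2) :
    (K / ε + ε ^ 3 / K + K) ^ 2 - (1 + K + K / ε) * (K / ε + ε ^ 3 / K + K) + K < 0 := by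
  have hK0 : 0 < K := by linarith
  have hε1 : ε < 1 := by nlinarith [sq_nonneg (ε - 1)]
  have hidentity : (K / ε + ε ^ 3 / K + K) ^ 2 - (1 + K + K / ε) * (K / ε + ε ^ 3 / K + K) + K
      = -((K / ε - ε ^ 2 - ε ^ 3) + ε ^ 3 / K * (1 - ε ^ 3 / K)) := by
    field_simp
    ring
  have hfirst : 0 < K / ε - ε ^ 2 - ε ^ 3 := by
    have h1 : 1 / ε ≤ K / ε := by gcongr
    have h2 : 0 < 1 / ε - ε ^ 2 - ε ^ 3 := by
      rw [show 1 / ε - ε ^ 2 - ε ^ 3 = (1 - ε ^ 3 - ε ^ 4) / ε by field_simp]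
      have : ε ^ 4 < ε ^ 3 := by nlinarith [pow_pos hε 3]
      exact div_pos (by linarith) hε
    linarith
  have hsecond : 0 ≤ ε ^ 3 / K * (1 - ε ^ 3 / K) := by
    have : ε ^ 3 / K ≤ 1 / 2 := by
      rw [div_le_iff₀ hK0]
      nlinarith
    have : 0 ≤ ε ^ 3 / K := by positivity
    nlinarith
  rw [hidentity]
  linarith

/-- the inequality h₁(a,κ) > 0 from the counter-example analysis.
For κ ≥ 1 and 0 < ε ≤ (1/2)^{1/3}, with a = ε²/κ² and
g(a,κ) = (1/2)[1 + κ² + κ/√a + √((1 + κ² + κ/√a)² − 4κ²)], one has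
g(a,κ) − ((1 + a²)/√a)·κ − κ² > 0. -/
theorem statement14 (κ ε : ℝ) (hκ : 1 ≤ κ) (hε : 0 < ε)
    (hε2 : ε ≤ (1 / 2 : ℝ) ^ ((1 : ℝ) / 3)) :
    0 < (1 / 2 : ℝ) * (1 + κ ^ 2 + κ / Real.sqrt (ε ^ 2 / κ ^ 2) +
          Real.sqrt ((1 + κ ^ 2 + κ / Real.sqrt (ε ^ 2 / κ ^ 2)) ^ 2 - 4 * κ ^ 2))
        - ((1 + (ε ^ 2 / κ ^ 2) ^ 2) / Real.sqrt (ε ^ 2 / κ ^ 2)) * κ - κ ^ 2 := by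
  have hκ0 : 0 < κ := by linarith
  have hsqrt : √(ε ^ 2 / κ ^ 2) = ε / κ := by
    rw [← div_pow, Real.sqrt_sq (by positivity)]
  have hε3 : ε ^ 3 ≤ 1 / 2 := by
    rw [one_div (3 : ℝ), Real.le_rpow_inv_iff_of_pos hε.le (by norm_num) (by norm_num)] at hε2
    exact_mod_cast hε2
  have hfirst : κ / (ε / κ) = κ ^ 2 / ε := by field_simp
  have hsecond : (1 + (ε ^ 2 / κ ^ 2) ^ 2) / (ε / κ) * κ = κ ^ 2 / ε + ε ^ 3 / κ ^ 2 := by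
    field_simp
  rw [hsqrt, hfirst, hsecond]
  have := lt_larger_root_of_eval_neg
    (quadratic_eval_neg_of_one_le_of_pow_three_le (one_le_pow₀ hκ : 1 ≤ κ ^ 2) hε hε3)
  linarith
end

section
/- Let e be an N×T matrix and let Σ and η be N×N matrices such that e e' = T·Σ + √T·η. Then ‖e‖⁴ ≤ T²·√N·‖Σ‖² + 2·T^{3/2}·‖Σ‖·‖η‖_HS + T·‖η²‖_HS. -/
open Matrix MeasureTheory
open scoped BigOperators

/-! With `M = e eᵀ`, which is symmetric, `‖e‖⁴ = ‖M M‖ ≤ ‖M M‖_HS`. Expanding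
`M M = T² Σ² + T^{3/2} (Σ η + η Σ) + T η²`, the Hilbert–Schmidt norm of each term is controlled
by the mixed inequalities `‖A B‖_HS ≤ ‖A‖ ‖B‖_HS` and `‖A B‖_HS ≤ ‖A‖_HS ‖B‖`, together with
`‖Σ‖_HS ≤ √N ‖Σ‖`. -/

open Real WithLp

section OperatorNorm
open scoped Matrix.Norms.L2Operator

variable {n m : ℕ}

lemma opNorm_transpose (A : Matrix (Fin n) (Fin m) ℝ) : opNorm Aᵀ = opNorm A := by
  change ‖Aᵀ‖ = ‖A‖
  rw [← conjTranspose_eq_transpose_of_trivial]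
  exact l2_opNorm_conjTranspose A

lemma opNorm_mul_transpose_self (A : Matrix (Fin n) (Fin m) ℝ) :
    opNorm (A * Aᵀ) = opNorm A ^ 2 := by
  have h := l2_opNorm_conjTranspose_mul_self Aᵀ
  rw [conjTranspose_eq_transpose_of_trivial, transpose_transpose] at h
  change ‖A * Aᵀ‖ = _
  rw [h, ← opNorm_transpose A, sq]
  rfl

lemma opNorm_nonneg (A : Matrix (Fin n) (Fin m) ℝ) : 0 ≤ opNorm A :=
  norm_nonneg _

lemma norm_toLp_mulVec_le_opNorm_mul (A : Matrix (Fin n) (Fin m) ℝ)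
    (x : Fin m → ℝ) : ‖toLp 2 (A *ᵥ x)‖ ≤ opNorm A * ‖toLp 2 x‖ :=
  (LinearMap.toContinuousLinearMap (toEuclideanLin A)).le_opNorm (toLp 2 x)

lemma opNorm_pow_four_eq (e : Matrix (Fin n) (Fin m) ℝ) :
    opNorm e ^ 4 = opNorm (e * eᵀ * (e * eᵀ)) := by
  have hsymm : (e * eᵀ)ᵀ = e * eᵀ := by rw [transpose_mul, transpose_transpose]
  nth_rewrite 2 [← hsymm]
  rw [opNorm_mul_transpose_self, opNorm_mul_transpose_self]
  ring

end OperatorNorm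

section Frobenius
attribute [local instance] Matrix.frobeniusNormedAddCommGroup Matrix.frobeniusNormedSpace

variable {n m l : ℕ}

lemma sqrt_frobSq_eq_norm (A : Matrix (Fin n) (Fin m) ℝ) : √(frobSq A) = ‖A‖ := by
  rw [frobenius_norm_def, Real.sqrt_eq_rpow]
  simp [frobSq, trace, mul_apply, sq]

lemma frobenius_norm_sq_eq_sum_rows (A : Matrix (Fin n) (Fin m) ℝ) :
    ‖A‖ ^ 2 = ∑ i, ‖toLp 2 (A i)‖ ^ 2 :=
  PiLp.norm_sq_eq_of_L2 _ (toLp 2 fun i => toLp 2 (A i))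

lemma opNorm_le_frobenius_norm (A : Matrix (Fin n) (Fin m) ℝ) : opNorm A ≤ ‖A‖ := by
  refine ContinuousLinearMap.opNorm_le_bound _ (norm_nonneg A) fun x => ?_
  -- submultiplicativity of the Frobenius norm, applied to `x` viewed as a one-column matrix
  have h := frobenius_norm_mul A (replicateCol Unit x.ofLp)
  rwa [← replicateCol_mulVec, frobenius_norm_replicateCol, frobenius_norm_replicateCol] at h

lemma frobenius_norm_mul_le_opNorm_mul (A : Matrix (Fin n) (Fin m) ℝ)
    (B : Matrix (Fin m) (Fin l) ℝ) : ‖A * B‖ ≤ opNorm A * ‖B‖ := by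
  -- the rows of `(A * B)ᵀ` are the images under `A` of the rows of `Bᵀ`
  rw [← frobenius_norm_transpose (A * B), ← frobenius_norm_transpose B]
  refine le_of_sq_le_sq ?_ (mul_nonneg (norm_nonneg _) (norm_nonneg _))
  rw [mul_pow, frobenius_norm_sq_eq_sum_rows, frobenius_norm_sq_eq_sum_rows, Finset.mul_sum]
  refine Finset.sum_le_sum fun j _ => ?_
  rw [← mul_pow]
  exact pow_le_pow_left₀ (norm_nonneg _) (norm_toLp_mulVec_le_opNorm_mul A (Bᵀ j)) 2

lemma frobenius_norm_mul_le_mul_opNorm (A : Matrix (Fin n) (Fin m) ℝ)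
    (B : Matrix (Fin m) (Fin l) ℝ) : ‖A * B‖ ≤ ‖A‖ * opNorm B := by
  rw [← frobenius_norm_transpose (A * B), transpose_mul, ← frobenius_norm_transpose A, mul_comm,
    ← opNorm_transpose B]
  exact frobenius_norm_mul_le_opNorm_mul Bᵀ Aᵀ

lemma frobenius_norm_le_sqrt_mul_opNorm (A : Matrix (Fin n) (Fin m) ℝ) :
    ‖A‖ ≤ √n * opNorm A := by
  have h := frobenius_norm_mul_le_mul_opNorm (1 : Matrix (Fin n) (Fin n) ℝ) A
  rw [Matrix.one_mul, ← diagonal_one, frobenius_norm_diagonal, EuclideanSpace.norm_eq] at h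
  simpa using h

lemma opNorm_pow_four_le_of_mul_transpose_eq (e : Matrix (Fin n) (Fin m) ℝ)
    (S η : Matrix (Fin n) (Fin n) ℝ) (a b : ℝ) (hdec : e * eᵀ = a • S + b • η) :
    opNorm e ^ 4 ≤ a ^ 2 * √n * opNorm S ^ 2 + 2 * |a * b| * opNorm S * √(frobSq η)
      + b ^ 2 * √(frobSq (η * η)) := by
  have hexpand : e * eᵀ * (e * eᵀ) =
      (a ^ 2) • (S * S) + (a * b) • (S * η + η * S) + (b ^ 2) • (η * η) := by
    rw [hdec]
    simp only [add_mul, mul_add, smul_mul_assoc, mul_smul_comm, smul_smul, smul_add]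
    module
  have hSS : ‖S * S‖ ≤ √n * opNorm S ^ 2 := by
    calc ‖S * S‖ ≤ opNorm S * ‖S‖ := frobenius_norm_mul_le_opNorm_mul S S
      _ ≤ opNorm S * (√n * opNorm S) :=
        mul_le_mul_of_nonneg_left (frobenius_norm_le_sqrt_mul_opNorm S) (opNorm_nonneg S)
      _ = √n * opNorm S ^ 2 := by ring
  have hSη : ‖S * η + η * S‖ ≤ 2 * (opNorm S * ‖η‖) := by
    have h₁ := frobenius_norm_mul_le_opNorm_mul S η
    have h₂ := frobenius_norm_mul_le_mul_opNorm η S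
    linarith [norm_add_le (S * η) (η * S)]
  rw [sqrt_frobSq_eq_norm, sqrt_frobSq_eq_norm]
  calc opNorm e ^ 4 = opNorm (e * eᵀ * (e * eᵀ)) := opNorm_pow_four_eq e
    _ ≤ ‖e * eᵀ * (e * eᵀ)‖ := opNorm_le_frobenius_norm _
    _ ≤ a ^ 2 * ‖S * S‖ + |a * b| * ‖S * η + η * S‖ + b ^ 2 * ‖η * η‖ := by
      rw [hexpand]
      refine (norm_add₃_le ..).trans_eq ?_
      simp only [norm_smul, Real.norm_eq_abs, abs_pow, sq_abs]
    _ ≤ a ^ 2 * (√n * opNorm S ^ 2) + |a * b| * (2 * (opNorm S * ‖η‖)) + b ^ 2 * ‖η * η‖ := by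
      gcongr
    _ = _ := by ring

end Frobenius

theorem statement15_general {N T : ℕ}
    (e : Matrix (Fin N) (Fin T) ℝ) (S η : Matrix (Fin N) (Fin N) ℝ)
    (hdec : e * eᵀ = (T : ℝ) • S + Real.sqrt T • η) :
    opNorm e ^ 4 ≤
      (T : ℝ) ^ 2 * Real.sqrt N * opNorm S ^ 2
        + 2 * ((T : ℝ) * Real.sqrt T) * opNorm S * Real.sqrt (frobSq η)
        + (T : ℝ) * Real.sqrt (frobSq (η * η)) := by
  have h := opNorm_pow_four_le_of_mul_transpose_eq e S η T (√T) hdec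
  rwa [sq_sqrt T.cast_nonneg, abs_of_nonneg (by positivity)] at h

/-- If e is N×T and Σ, η are N×N with e e' = T·Σ + √T·η, then
‖e‖⁴ ≤ T²·√N·‖Σ‖² + 2·T^{3/2}·‖Σ‖·‖η‖_HS + T·‖η²‖_HS. -/
theorem statement15 {N T : ℕ} (hN : 0 < N) (hT : 0 < T)
    (e : Matrix (Fin N) (Fin T) ℝ) (S η : Matrix (Fin N) (Fin N) ℝ)
    (hdec : e * eᵀ = (T : ℝ) • S + Real.sqrt T • η) :
    opNorm e ^ 4 ≤
      (T : ℝ) ^ 2 * Real.sqrt N * opNorm S ^ 2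
        + 2 * ((T : ℝ) * Real.sqrt T) * opNorm S * Real.sqrt (frobSq η)
        + (T : ℝ) * Real.sqrt (frobSq (η * η)) :=
  statement15_general e S η hdec
end
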